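/- If r_n = 1 in the continued fraction expansion of √N (with complete quotients (√N + c_n)/r_n), then a_{n+1} = 2·a_0, where a_0 = ⌊√N⌋. -/

import Mathlib

/-!
With `A = ⌊√N⌋`, every complete quotient `(√N + c)/r` is reduced, and one step of the algorithm
preserves this: the new `c'` is bounded through `a r ≤ A + c < (a + 1) r`, the new `r'` through
`r' r = N - c'²`. When `r_n = 1`, reducedness gives `√N - c_n < 1`, which forces `c_n = A`, hence
`a_{n+1} = 2A`.
-/

/-- Integer form of "`(√N + c)/r` is reduced and `r ∣ N - c²`", with `A = ⌊√N⌋`: the bounds say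
`c < √N` and `√N - c < r < √N + c`. -/
structure IsReducedSurd (N A c r : ℤ) : Prop where
  c_nonneg : 0 ≤ c
  c_le : c ≤ A
  lt_c_add : A < c + r
  le_A_add : r ≤ A + c
  dvd : r ∣ N - c ^ 2

namespace IsReducedSurd

variable {N A c r : ℤ}

theorem r_pos (h : IsReducedSurd N A c r) : 0 < r := by
  linarith [h.c_le, h.lt_c_add]

theorem c_eq_of_r_eq_one (h : IsReducedSurd N A c 1) : c = A := by
  linarith [h.c_le, h.lt_c_add]

theorem fdiv_mul_sub {c' : ℤ} (h : IsReducedSurd N A c r) (hc' : c' = (A + c).fdiv r * r - c) :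
    IsReducedSurd N A c' r := by
  set q := (A + c).fdiv r
  have hq : q = (A + c) / r := Int.fdiv_eq_ediv_of_nonneg _ h.r_pos.le
  have hq_le : q * r ≤ A + c := hq ▸ Int.ediv_mul_le _ h.r_pos.ne'
  have hlt_q : A + c < (q + 1) * r := hq ▸ Int.lt_ediv_add_one_mul_self _ h.r_pos
  have hq_pos : 1 ≤ q := by
    by_contra! hq0
    nlinarith [h.le_A_add, h.r_pos]
  have hr_le : r ≤ q * r := le_mul_of_one_le_left h.r_pos.le hq_pos
  have hdvd : r ∣ N - c' ^ 2 := by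
    have hsq : N - c' ^ 2 = (N - c ^ 2) + (c - c') * (q * r) := by rw [hc']; ring
    rw [hsq]
    exact dvd_add h.dvd (Dvd.intro_left ((c - c') * q) (by ring))
  refine ⟨?_, ?_, ?_, ?_, hdvd⟩ <;> linarith [h.c_le]

theorem fdiv_sub_sq {r' : ℤ} (hlo : A ^ 2 < N) (hhi : N < (A + 1) ^ 2)
    (h : IsReducedSurd N A c r) (hr' : r' = (N - c ^ 2).fdiv r) : IsReducedSurd N A c r' := by
  have hr := h.r_pos
  have hmul : r' * r = N - c ^ 2 := by
    rw [hr', Int.fdiv_eq_ediv_of_nonneg _ hr.le, Int.ediv_mul_cancel h.dvd]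
  have hc := h.c_nonneg
  have hcA := h.c_le
  -- `(A - c) r ≤ (A - c)(A + c) < N - c² = r' r`
  have hlo' : A < c + r' := by
    have : (A - c) * r ≤ (A - c) * (A + c) :=
      mul_le_mul_of_nonneg_left h.le_A_add (sub_nonneg.mpr hcA)
    nlinarith
  -- `r' r = N - c² < (A + 1 - c)(A + 1 + c) ≤ r (A + 1 + c)`
  have hhi' : r' ≤ A + c := by
    have : (A + 1 - c) * (A + 1 + c) ≤ r * (A + 1 + c) :=
      mul_le_mul_of_nonneg_right (by linarith [h.lt_c_add]) (by linarith)
    nlinarith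
  exact ⟨hc, hcA, hlo', hhi', Dvd.intro _ hmul⟩

end IsReducedSurd

theorem Nat.sqrt_sq_lt_of_not_isSquare {N : ℕ} (hns : ¬ IsSquare N) : (N.sqrt : ℤ) ^ 2 < N := by
  have hne : N.sqrt ^ 2 ≠ N := fun h => hns ⟨N.sqrt, by rw [← sq, h]⟩
  exact_mod_cast lt_of_le_of_ne (Nat.sqrt_le' N) hne

theorem stmt_7_general
(N : ℕ) (hns : ¬ IsSquare N)
    (a c r : ℕ → ℤ)
    (ha0 : a 0 = (Nat.sqrt N : ℤ)) (hc0 : c 0 = a 0) (hr0 : r 0 = (N : ℤ) - a 0 ^ 2)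
    (ha : ∀ m, a (m + 1) = (a 0 + c m).fdiv (r m))
    (hc : ∀ m, c (m + 1) = a (m + 1) * r m - c m)
    (hr : ∀ m, r (m + 1) = ((N : ℤ) - c (m + 1) ^ 2).fdiv (r m)) :
    ∀ n, r n = 1 → a (n + 1) = 2 * a 0 := by
  have hlo : a 0 ^ 2 < N := ha0 ▸ Nat.sqrt_sq_lt_of_not_isSquare hns
  have hhi : (N : ℤ) < (a 0 + 1) ^ 2 := by rw [ha0]; exact_mod_cast Nat.lt_succ_sqrt' N
  have hred : ∀ m, IsReducedSurd N (a 0) (c m) (r m) := by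
    intro m
    induction m with
    | zero =>
      rw [hc0, hr0]
      exact ⟨ha0 ▸ Int.natCast_nonneg _, le_rfl, by linarith, by nlinarith, dvd_rfl⟩
    | succ m ih =>
      exact (ih.fdiv_mul_sub (ha m ▸ hc m)).fdiv_sub_sq hlo hhi (hr m)
  intro n hrn
  have hcn : c n = a 0 := (hrn ▸ hred n).c_eq_of_r_eq_one
  rw [ha n, hcn, hrn, Int.fdiv_one, two_mul]

theorem stmt_7
(N : ℕ) (hN : 0 < N) (hns : ¬ IsSquare N)
    (a c r : ℕ → ℤ)
    (ha0 : a 0 = (Nat.sqrt N : ℤ)) (hc0 : c 0 = a 0) (hr0 : r 0 = (N : ℤ) - a 0 ^ 2)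
    (ha : ∀ m, a (m + 1) = (a 0 + c m).fdiv (r m))
    (hc : ∀ m, c (m + 1) = a (m + 1) * r m - c m)
    (hr : ∀ m, r (m + 1) = ((N : ℤ) - c (m + 1) ^ 2).fdiv (r m)) :
    ∀ n, r n = 1 → a (n + 1) = 2 * a 0 :=
  stmt_7_general N hns a c r ha0 hc0 hr0 ha hc hr
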